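/- There exists a constant C > 0 depending only on σ and β (independent of ε and N) such that, under Assumption 2.2 and the condition σ/(4eβ) ≤ C₁ ≤ (1/2)·max{σ/β, 1/4}, for every real μ with 0 ≤ μ ≤ σ and every integer i with 0 ≤ i ≤ N/4 − 2, the mesh generated by φ satisfies h_i^μ · e^{−β x_i/ε} ≤ C·ε^μ·N^{−μ}. -/
import Mathlib


/-- The Bakhvalov-type mesh generating function of Kopteva, with transition
parameter `ϑ = 1/4 - C₁ ε`. -/
noncomputable def phi (β σ ε C₁ : ℝ) (t : ℝ) : ℝ :=
  if t ≤ 1/4 - C₁ * ε then -(σ * ε / β) * Real.log (1 - 4 * t)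
  else if t < 1 - (1/4 - C₁ * ε) then
    ((1 + (σ * ε / β) * Real.log (4 * C₁ * ε)) / (1 - 2 * (1/4 - C₁ * ε)))
        * (t - (1/4 - C₁ * ε))
      + ((σ * ε / β) * Real.log (4 * C₁ * ε) / (1 - 2 * (1/4 - C₁ * ε)))
        * (t - (1 - (1/4 - C₁ * ε)))
  else 1 + (σ * ε / β) * Real.log (1 - 4 * (1 - t))

/-- Mesh points `x_i = φ(i/N)`. -/
noncomputable def meshXK (β σ ε C₁ : ℝ) (N i : ℕ) : ℝ := phi β σ ε C₁ ((i : ℝ) / (N : ℝ))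

/-- Mesh step sizes `h_i = x_{i+1} - x_i`. -/
noncomputable def meshHK (β σ ε C₁ : ℝ) (N i : ℕ) : ℝ :=
  meshXK β σ ε C₁ N (i + 1) - meshXK β σ ε C₁ N i

set_option maxHeartbeats 1600000 in
theorem stmt_16 (β σ : ℝ) (hβ : 0 < β) (hσ : 0 < σ) :
    ∃ C : ℝ, 0 < C ∧
      ∀ (ε C₁ : ℝ) (N : ℕ), 0 < ε → ε < 1 → 4 ∣ N →
        max 8 (2 * Real.log (σ / β)) ≤ (N : ℝ) →
        ε ≤ min (β / (4 * σ)) 1 * (N : ℝ)⁻¹ →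
        σ / (4 * Real.exp 1 * β) ≤ C₁ →
        C₁ ≤ 1 / 2 * max (σ / β) (1 / 4) →
        ∀ μ : ℝ, 0 ≤ μ → μ ≤ σ → ∀ i : ℕ, i + 2 ≤ N / 4 →
          meshHK β σ ε C₁ N i ^ μ * Real.exp (-(β * meshXK β σ ε C₁ N i) / ε) ≤
            C * ε ^ μ * (N : ℝ) ^ (-μ) := by
  set M : ℝ := max 1 (4 * σ / β) with hM
  have hM1 : (1:ℝ) ≤ M := le_max_left _ _
  refine ⟨(2 * M) ^ σ, by positivity, ?_⟩
  intro ε C₁ N hε hε1 hdvd hN hεN hC1l hC1u μ hμ0 hμσ i hi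
  set n : ℝ := (N : ℝ) with hn
  have hn8 : (8:ℝ) ≤ n := le_trans (le_max_left _ _) hN
  have hn0 : (0:ℝ) < n := by linarith
  have hiN : 4 * i + 8 ≤ N := by
    obtain ⟨k, rfl⟩ := hdvd
    omega
  have hiR : 4 * (i:ℝ) + 8 ≤ n := by rw [hn]; exact_mod_cast hiN
  -- C₁ ε n ≤ 1
  have hmm : max (σ/β) (1/4) * min (β/(4*σ)) 1 ≤ 1/2 := by
    rcases le_total (σ/β) (1/4) with h | h
    · calc max (σ/β) (1/4) * min (β/(4*σ)) 1 ≤ (1/4) * 1 :=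
            mul_le_mul (max_le h le_rfl) (min_le_right _ _)
              (le_min (by positivity) zero_le_one) (by norm_num)
      _ ≤ 1/2 := by norm_num
    · calc max (σ/β) (1/4) * min (β/(4*σ)) 1 ≤ (σ/β) * (β/(4*σ)) :=
            mul_le_mul (max_le le_rfl h) (min_le_left _ _)
              (le_min (by positivity) zero_le_one) (by positivity)
      _ = 1/4 := by field_simp
      _ ≤ 1/2 := by norm_num
  have hninv : (0:ℝ) < n⁻¹ := by positivity
  have hCe : C₁ * ε ≤ (1/2 * max (σ/β) (1/4)) * (min (β/(4*σ)) 1 * n⁻¹) :=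
    mul_le_mul hC1u hεN hε.le (by positivity)
  have hC1e : C₁ * ε ≤ n⁻¹ := by nlinarith [hCe, hmm, hninv]
  have hCen : C₁ * ε * n ≤ 1 := by
    have := mul_le_mul_of_nonneg_right hC1e hn0.le
    rwa [inv_mul_cancel₀ hn0.ne'] at this
  -- both mesh points are in the first branch
  have ht1 : ((i:ℝ) + 1) / n ≤ 1/4 - C₁ * ε := by
    rw [div_le_iff₀ hn0]; nlinarith
  have ht0 : (i:ℝ) / n ≤ 1/4 - C₁ * ε :=
    le_trans ((div_le_div_iff_of_pos_right hn0).mpr (by linarith)) ht1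
  set a : ℝ := 1 - 4 * ((i:ℝ) / n) with ha
  set b : ℝ := 1 - 4 * (((i:ℝ) + 1) / n) with hbb
  have hx0 : meshXK β σ ε C₁ N i = -(σ * ε / β) * Real.log a := by
    rw [meshXK, phi, if_pos ht0]
  have hc : (((i + 1 : ℕ)):ℝ) = (i:ℝ) + 1 := by push_cast; ring
  have hx1 : meshXK β σ ε C₁ N (i + 1) = -(σ * ε / β) * Real.log b := by
    rw [meshXK, hc, phi, if_pos ht1]
  have hb4 : 4 / n ≤ b := by
    have hbn : b = (n - 4 * (i:ℝ) - 4) / n := by rw [hbb]; field_simp; ring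
    rw [hbn]
    exact (div_le_div_iff_of_pos_right hn0).mpr (by linarith)
  have hb0 : (0:ℝ) < b := lt_of_lt_of_le (by positivity) hb4
  have hab : a = b + 4 / n := by rw [ha, hbb]; field_simp; ring
  have ha0 : (0:ℝ) < a := by rw [hab]; positivity
  have ha2b : a ≤ 2 * b := by rw [hab]; linarith
  have hb1 : b ≤ 1 := by
    have : (0:ℝ) ≤ 4 * (((i:ℝ) + 1) / n) := by positivity
    rw [hbb]; linarith
  -- step size bound
  set D : ℝ := 4 * σ / β with hD
  set K : ℝ := D * ε * n⁻¹ * b⁻¹ with hK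
  have hlog : Real.log a - Real.log b ≤ (4 / n) / b := by
    have h1 : Real.log (a / b) ≤ a / b - 1 := Real.log_le_sub_one_of_pos (by positivity)
    rw [Real.log_div ha0.ne' hb0.ne'] at h1
    have h2 : a / b - 1 = (4 / n) / b := by
      rw [hab]; field_simp; ring
    linarith
  have hhK : meshHK β σ ε C₁ N i ≤ K := by
    rw [meshHK, hx0, hx1]
    have : -(σ * ε / β) * Real.log b - -(σ * ε / β) * Real.log a
        = (σ * ε / β) * (Real.log a - Real.log b) := by ring
    rw [this]
    calc (σ * ε / β) * (Real.log a - Real.log b) ≤ (σ * ε / β) * ((4 / n) / b) :=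
          mul_le_mul_of_nonneg_left hlog (by positivity)
      _ = K := by rw [hK, hD]; field_simp
  have hh0 : 0 ≤ meshHK β σ ε C₁ N i := by
    rw [meshHK, hx0, hx1]
    have hba : Real.log b ≤ Real.log a := by
      apply Real.log_le_log hb0
      rw [hab]
      have : (0:ℝ) < 4 / n := by positivity
      linarith
    have := mul_le_mul_of_nonneg_left hba (show (0:ℝ) ≤ σ * ε / β by positivity)
    linarith
  -- exponential term
  have hexp : Real.exp (-(β * meshXK β σ ε C₁ N i) / ε) = a ^ σ := by
    rw [hx0, Real.rpow_def_of_pos ha0]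
    congr 1
    field_simp
  -- key constant bound
  have hDM : D ^ μ ≤ M ^ σ := by
    calc D ^ μ ≤ M ^ μ := Real.rpow_le_rpow (by positivity) (le_max_right _ _) hμ0
      _ ≤ M ^ σ := Real.rpow_le_rpow_of_exponent_le hM1 hμσ
  have key : D ^ μ * (b⁻¹) ^ μ * b ^ σ ≤ M ^ σ := by
    have h1 : (b⁻¹) ^ μ * b ^ σ = b ^ (σ - μ) := by
      rw [Real.inv_rpow hb0.le, Real.rpow_sub hb0, div_eq_mul_inv]
      ring
    calc D ^ μ * (b⁻¹) ^ μ * b ^ σ = D ^ μ * b ^ (σ - μ) := by rw [mul_assoc, h1]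
      _ ≤ M ^ σ * 1 := mul_le_mul hDM (Real.rpow_le_one hb0.le hb1 (by linarith))
            (by positivity) (by positivity)
      _ = M ^ σ := mul_one _
  have hninvμ : n ^ (-μ) = (n⁻¹) ^ μ := by
    rw [Real.rpow_neg hn0.le, Real.inv_rpow hn0.le]
  calc meshHK β σ ε C₁ N i ^ μ * Real.exp (-(β * meshXK β σ ε C₁ N i) / ε)
      = meshHK β σ ε C₁ N i ^ μ * a ^ σ := by rw [hexp]
    _ ≤ K ^ μ * (2 * b) ^ σ :=
        mul_le_mul (Real.rpow_le_rpow hh0 hhK hμ0)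
          (Real.rpow_le_rpow ha0.le ha2b hσ.le) (by positivity) (by positivity)
    _ = (D ^ μ * (b⁻¹) ^ μ * b ^ σ) * ((2:ℝ) ^ σ * ε ^ μ * (n⁻¹) ^ μ) := by
        rw [hK, Real.mul_rpow (by positivity) (by positivity),
          Real.mul_rpow (by positivity) (by positivity),
          Real.mul_rpow (by positivity) (by positivity),
          Real.mul_rpow (by norm_num : (0:ℝ) ≤ 2) hb0.le]
        ring
    _ ≤ M ^ σ * ((2:ℝ) ^ σ * ε ^ μ * (n⁻¹) ^ μ) :=
        mul_le_mul_of_nonneg_right key (by positivity)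
    _ = (2 * M) ^ σ * ε ^ μ * n ^ (-μ) := by
        rw [Real.mul_rpow (by norm_num : (0:ℝ) ≤ 2) (by positivity), hninvμ]
        ring
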